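/- Let x, Δx : ℝ → ℂ be smooth with compact support, set x̃ = x + Δx, R(τ) = ∫ x(t) conj(x(t-τ)) dt, ΔR(τ) = ∫ Δx(t) conj(x(t-τ)) dt, and P̃(τ) = |R(τ) + ΔR(τ)|². Assume ΔR(0) is real. Then P̃'(0) = -2·Re{⟨Δx, x'⟩ · conj(⟨x̃, x⟩)}. -/

import Mathlib

open MeasureTheory

open Convolution in
theorem attacked_corr_sq_deriv_at_zero
    (x Δx : ℝ → ℂ) (hx : ContDiff ℝ (⊤ : ℕ∞) x) (hΔx : ContDiff ℝ (⊤ : ℕ∞) Δx)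
    (hsupp : HasCompactSupport x) (hΔsupp : HasCompactSupport Δx)
    (xt : ℝ → ℂ) (hxt : ∀ t, xt t = x t + Δx t)
    (R ΔR : ℝ → ℂ)
    (hR : ∀ τ, R τ = ∫ t : ℝ, x t * (starRingEnd ℂ) (x (t - τ)))
    (hΔR : ∀ τ, ΔR τ = ∫ t : ℝ, Δx t * (starRingEnd ℂ) (x (t - τ)))
    (hreal : (ΔR 0).im = 0)
    (P : ℝ → ℝ) (hP : ∀ τ, P τ = ‖R τ + ΔR τ‖ ^ 2) :
    deriv P 0 =
      -2 * ((∫ t : ℝ, Δx t * (starRingEnd ℂ) (deriv x t)) *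
        (starRingEnd ℂ) (∫ t : ℝ, xt t * (starRingEnd ℂ) (x t))).re := by
  have hxc : Continuous x := hx.continuous
  have hΔc : Continuous Δx := hΔx.continuous
  have hxteq : xt = fun t => x t + Δx t := funext hxt
  have hxtc : Continuous xt := by rw [hxteq]; exact hxc.add hΔc
  have hx' : Continuous (deriv x) := hx.continuous_deriv (by simp)
  -- generic integrability helper
  have hint : ∀ (f : ℝ → ℂ), Continuous f → HasCompactSupport f →
      ∀ (h : ℝ → ℂ), Continuous h → Integrable (fun t => f t * h t) := by
    intro f hf hcf h hh
    exact (hf.mul hh).integrable_of_hasCompactSupport (hcf.mul_right)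
  have hconjx : ∀ τ : ℝ, Continuous fun t => (starRingEnd ℂ) (x (t - τ)) := fun τ =>
    continuous_star.comp (hxc.comp (continuous_id.sub continuous_const))
  have hconjx' : Continuous fun t => (starRingEnd ℂ) (deriv x t) :=
    continuous_star.comp hx'
  have hconjx0 : Continuous fun t => (starRingEnd ℂ) (x t) := continuous_star.comp hxc
  -- the kernel g
  set g : ℝ → ℂ := fun s => (starRingEnd ℂ) (x (-s)) with hgdef
  have hgs : HasCompactSupport g :=
    (hsupp.comp_homeomorph (Homeomorph.neg ℝ)).comp_left (map_zero _)
  have hgsm : ContDiff ℝ 1 g :=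
    ((Complex.conjCLE.contDiff.comp (hx.comp contDiff_neg)) :
      ContDiff ℝ (⊤ : ℕ∞) g).of_le (by simp)
  have hgd : ∀ s : ℝ, HasDerivAt g (-((starRingEnd ℂ) (deriv x (-s)))) s := by
    intro s
    have h1 : HasDerivAt (fun u : ℝ => x (-u)) (-deriv x (-s)) s := by
      simpa [Function.comp_def] using ((hx.differentiable (by simp) (-s)).hasDerivAt).scomp s (hasDerivAt_neg s)
    simpa using h1.star
  have hderivg : deriv g = fun s => -((starRingEnd ℂ) (deriv x (-s))) :=
    funext fun s => (hgd s).deriv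
  have hloc : LocallyIntegrable xt volume := hxtc.locallyIntegrable
  have hconv :=
    HasCompactSupport.hasDerivAt_convolution_right (ContinuousLinearMap.mul ℝ ℂ) hloc hgs hgsm 0
  -- identify the convolution with R + ΔR
  have hSconv : (xt ⋆[ContinuousLinearMap.mul ℝ ℂ] g) = fun τ => R τ + ΔR τ := by
    funext τ
    rw [convolution_def, hR, hΔR]
    have hpt : ∀ t : ℝ, (ContinuousLinearMap.mul ℝ ℂ) (xt t) (g (τ - t)) =
        x t * (starRingEnd ℂ) (x (t - τ)) + Δx t * (starRingEnd ℂ) (x (t - τ)) := by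
      intro t
      simp [hgdef, hxt t, neg_sub, add_mul]
    simp only [hpt]
    exact integral_add (hint x hxc hsupp _ (hconjx τ)) (hint Δx hΔc hΔsupp _ (hconjx τ))
  -- value of the derivative
  set A : ℂ := ∫ t : ℝ, x t * (starRingEnd ℂ) (deriv x t) with hA
  set B : ℂ := ∫ t : ℝ, Δx t * (starRingEnd ℂ) (deriv x t) with hB
  set C : ℂ := ∫ t : ℝ, xt t * (starRingEnd ℂ) (x t) with hC
  have hDval : (xt ⋆[ContinuousLinearMap.mul ℝ ℂ] deriv g) 0 = -(A + B) := by
    rw [convolution_def]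
    have hpt : ∀ t : ℝ, (ContinuousLinearMap.mul ℝ ℂ) (xt t) (deriv g (0 - t)) =
        -(x t * (starRingEnd ℂ) (deriv x t) + Δx t * (starRingEnd ℂ) (deriv x t)) := by
      intro t
      simp [hderivg, hxt t, zero_sub, neg_neg, add_mul, mul_neg]
      ring
    simp only [hpt]
    rw [integral_neg, integral_add (hint x hxc hsupp _ hconjx') (hint Δx hΔc hΔsupp _ hconjx')]
  have hS : HasDerivAt (fun τ => R τ + ΔR τ) (-(A + B)) 0 := by
    rw [← hDval, ← hSconv]; exact hconv
  -- C = S 0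
  have hC0 : R 0 + ΔR 0 = C := by
    rw [hR, hΔR, hC, hxteq]
    simp only [sub_zero, add_mul]
    exact (integral_add (hint x hxc hsupp _ hconjx0) (hint Δx hΔc hΔsupp _ hconjx0)).symm
  -- C is real
  have hR0im : (R 0).im = 0 := by
    rw [hR]
    simp only [sub_zero]
    have hcj : (starRingEnd ℂ) (∫ t : ℝ, x t * (starRingEnd ℂ) (x t)) =
        ∫ t : ℝ, x t * (starRingEnd ℂ) (x t) := by
      rw [← integral_conj]
      congr 1
      funext t
      simp [mul_comm]
    exact Complex.conj_eq_iff_im.mp hcj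
  have hCim : C.im = 0 := by
    rw [← hC0, Complex.add_im, hR0im, hreal, add_zero]
  -- A is purely imaginary
  have hu : ∀ t : ℝ, HasDerivAt (fun t => x t * (starRingEnd ℂ) (x t))
      (deriv x t * (starRingEnd ℂ) (x t) + x t * (starRingEnd ℂ) (deriv x t)) t := fun t =>
    ((hx.differentiable (by simp) t).hasDerivAt).mul ((hx.differentiable (by simp) t).hasDerivAt).star
  have huC : ContDiff ℝ 1 (fun t => x t * (starRingEnd ℂ) (x t)) :=
    ((hx.mul (Complex.conjCLE.contDiff.comp hx) : ContDiff ℝ (⊤ : ℕ∞) _)).of_le (by simp)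
  have huS : HasCompactSupport (fun t => x t * (starRingEnd ℂ) (x t)) := hsupp.mul_right
  have hderivu : deriv (fun t => x t * (starRingEnd ℂ) (x t)) =
      fun t => deriv x t * (starRingEnd ℂ) (x t) + x t * (starRingEnd ℂ) (deriv x t) :=
    funext fun t => (hu t).deriv
  have hderivuI : Integrable (deriv (fun t => x t * (starRingEnd ℂ) (x t))) := by
    rw [hderivu]
    exact ((hx'.mul hconjx0).add (hxc.mul hconjx')).integrable_of_hasCompactSupport
      (by
        have h := huS.deriv; rw [hderivu] at h
        exact h)
  have hintderiv : (∫ t : ℝ, deriv (fun t => x t * (starRingEnd ℂ) (x t)) t) = 0 := by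
    rw [← intervalIntegral.integral_Iic_add_Ioi (b := 0) hderivuI.integrableOn hderivuI.integrableOn,
      HasCompactSupport.integral_Iic_deriv_eq huC huS 0,
      HasCompactSupport.integral_Ioi_deriv_eq huC huS 0]
    ring
  have hAconj : A + (starRingEnd ℂ) A = 0 := by
    have h1 : Integrable (fun t => x t * (starRingEnd ℂ) (deriv x t)) := hint x hxc hsupp _ hconjx'
    have h2 : Integrable (fun t => (starRingEnd ℂ) (x t * (starRingEnd ℂ) (deriv x t))) :=
      (continuous_star.comp (hxc.mul hconjx')).integrable_of_hasCompactSupport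
        ((hsupp.mul_right).comp_left (star_zero _))
    rw [hA, ← integral_conj, ← integral_add h1 h2, ← hintderiv]
    congr 1
    funext t
    rw [hderivu]
    simp only [map_mul, RingHomCompTriple.comp_apply, RingHom.id_apply, Complex.conj_conj]
    ring
  have hAre : A.re = 0 := by
    have h2 := congrArg Complex.re hAconj
    simp [Complex.add_re, Complex.conj_re] at h2
    linarith
  -- derivative of P
  have hP2 : P = fun τ => ((R τ + ΔR τ) * (starRingEnd ℂ) (R τ + ΔR τ)).re := by
    funext τ
    rw [hP, Complex.mul_conj]
    simp [Complex.sq_norm]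
  have hmul : HasDerivAt (fun τ => (R τ + ΔR τ) * (starRingEnd ℂ) (R τ + ΔR τ))
      (-(A + B) * (starRingEnd ℂ) (R 0 + ΔR 0) + (R 0 + ΔR 0) * (starRingEnd ℂ) (-(A + B))) 0 :=
    hS.mul hS.star
  have hPd : HasDerivAt P
      ((-(A + B) * (starRingEnd ℂ) (R 0 + ΔR 0) + (R 0 + ΔR 0) * (starRingEnd ℂ) (-(A + B))).re)
      0 := by
    rw [hP2]
    exact Complex.reCLM.hasFDerivAt.comp_hasDerivAt 0 hmul
  rw [hPd.deriv, hC0]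
  simp only [Complex.add_re, Complex.mul_re, Complex.neg_re, Complex.neg_im, Complex.add_im,
    Complex.conj_re, Complex.conj_im, hAre, hCim]
  ring
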